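/- If there is a deterministic online algorithm for matching indivisible items that is α-CMMS, then there is a non-wasteful deterministic online algorithm that is α-CMMS: simulating the original algorithm as advice and matching each arriving item to the advised agent if unmatched (else any unmatched liking agent) produces, at every step, a set of matched agents that is a superset of the advice algorithm's matched agents. -/
import Mathlib


open Finset

variable {A : Type*} [Fintype A] [DecidableEq A] {k : ℕ}

/-- The set of agents that like the item arriving at step `t`. -/
def likersAt (L : List (Finset A)) (t : ℕ) : Finset A := L.getD t ∅

/-- A finset of (item index, agent) pairs is a partial matching. -/
def IsPartialMatching (P : Finset (ℕ × A)) : Prop :=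
  ∀ p ∈ P, ∀ q ∈ P, (p.1 = q.1 ∨ p.2 = q.2) → p = q

instance (P : Finset (ℕ × A)) : Decidable (IsPartialMatching P) := by
  unfold IsPartialMatching; infer_instance

/-- Optimistic valuation `V*` of the class with agents `C` for the set `S` of item
indices: the maximum size of a matching between `S` and `C` along the likes in `L`. -/
def Vstar (L : List (Finset A)) (C : Finset A) (S : Finset ℕ) : ℕ :=
  ((S ×ˢ C).powerset.filter
    (fun P => (∀ p ∈ P, p.2 ∈ likersAt L p.1) ∧ IsPartialMatching P)).sup Finset.card

/-- The agents of class `i`. -/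
def classAgents (classOf : A → Fin k) (i : Fin k) : Finset A :=
  Finset.univ.filter fun a => classOf a = i

/-- A deterministic online algorithm: given the liker sets of previously arrived items
and the liker set of the current item, it proposes an agent (or discards the item). -/
abbrev OnlineAlg (A : Type*) := List (Finset A) → Finset A → Option A

/-- The set of agents matched before step `t` when `Alg` runs on instance `L`. -/
def matchedUpTo (Alg : OnlineAlg A) (L : List (Finset A)) : ℕ → Finset A
  | 0 => ∅
  | t + 1 =>
    let prev := matchedUpTo Alg L t
    match Alg (L.take t) (likersAt L t) with
    | some a => if a ∈ likersAt L t ∧ a ∉ prev then insert a prev else prev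
    | none => prev

/-- The agent to whom item `t` is (irrevocably) matched by `Alg` on instance `L`;
a proposal is effective only if the proposed agent likes the item and is unmatched. -/
def assignAt (Alg : OnlineAlg A) (L : List (Finset A)) (t : ℕ) : Option A :=
  match Alg (L.take t) (likersAt L t) with
  | some a => if a ∈ likersAt L t ∧ a ∉ matchedUpTo Alg L t then some a else none
  | none => none

/-- The set of items matched to agents of class `j`. -/
def classItems (classOf : A → Fin k) (Alg : OnlineAlg A) (L : List (Finset A))
    (j : Fin k) : Finset ℕ :=
  (Finset.range L.length).filter fun t =>
    ∃ a ∈ (Finset.univ : Finset A), assignAt Alg L t = some a ∧ classOf a = j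

/-- Non-wastefulness of an online algorithm: whenever an arriving item is liked by
some currently unmatched agent, the item is matched. -/
def NonWasteful (Alg : OnlineAlg A) : Prop :=
  ∀ (L : List (Finset A)) (t : ℕ), t < L.length →
    (∃ a ∈ likersAt L t, a ∉ matchedUpTo Alg L t) → (assignAt Alg L t).isSome

/-- `Alg` is `α`-CEF1: on every instance, for every pair of classes `i, j`, either
class `j` receives no item or the envy of `i` towards `j` is bounded after removing
one item from `j`'s bundle. -/
def IsCEF1 (classOf : A → Fin k) (α : ℝ) (Alg : OnlineAlg A) : Prop :=
  ∀ (L : List (Finset A)) (i j : Fin k),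
    classItems classOf Alg L j = ∅ ∨
    ∃ t ∈ classItems classOf Alg L j,
      ((classItems classOf Alg L i).card : ℝ) ≥
        α * (Vstar L (classAgents classOf i) (classItems classOf Alg L j \ {t}) : ℝ)

/-- The maximin share of class `i`: the best over indivisible matchings `X` of all
items to all agents of the worst bundle value `V*ᵢ(Yⱼ(X))` over classes `j`. -/
noncomputable def mmsShare (classOf : A → Fin k) (L : List (Finset A)) (i : Fin k) : ℕ :=
  sSup {v : ℕ | ∃ X ∈ ((Finset.range L.length) ×ˢ (Finset.univ : Finset A)).powerset,
    (∀ p ∈ X, p.2 ∈ likersAt L p.1) ∧ IsPartialMatching X ∧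
    ∀ j : Fin k, v ≤ Vstar L (classAgents classOf i)
      ((X.filter fun p => classOf p.2 = j).image Prod.fst)}

/-- `Alg` is `α`-CMMS on every instance. -/
def IsCMMS (classOf : A → Fin k) (α : ℝ) (Alg : OnlineAlg A) : Prop :=
  ∀ (L : List (Finset A)) (i : Fin k),
    ((classItems classOf Alg L i).card : ℝ) ≥ α * (mmsShare classOf L i : ℝ)



/-- One greedy step: follow the advice of `Alg` if the advised agent likes the item
and is unmatched; otherwise match any unmatched liking agent. -/
noncomputable def greedyStep (Alg : OnlineAlg A) (prev : Finset A) (hist : List (Finset A))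
    (cur : Finset A) : Option A :=
  match Alg hist cur with
  | some a => if a ∈ cur ∧ a ∉ prev then some a else (cur \ prev).toList.head?
  | none => (cur \ prev).toList.head?

noncomputable def greedyUpdate (Alg : OnlineAlg A) (L : List (Finset A)) (t : ℕ)
    (prev : Finset A) : Finset A :=
  match greedyStep Alg prev (L.take t) (likersAt L t) with
  | some a => if a ∈ likersAt L t ∧ a ∉ prev then insert a prev else prev
  | none => prev

/-- The matched set of the greedy simulation after `t` steps. -/
noncomputable def greedy (Alg : OnlineAlg A) (L : List (Finset A)) (t : ℕ) : Finset A :=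
  Nat.rec ∅ (fun s prev => greedyUpdate Alg L s prev) t

lemma greedy_succ (Alg : OnlineAlg A) (L : List (Finset A)) (t : ℕ) :
    greedy Alg L (t + 1) = greedyUpdate Alg L t (greedy Alg L t) := rfl

/-- The non-wasteful algorithm obtained from `Alg` by simulation. -/
noncomputable def mkAlg (Alg : OnlineAlg A) : OnlineAlg A := fun hist cur =>
  greedyStep Alg (greedy Alg hist hist.length) hist cur

lemma likersAt_take (L : List (Finset A)) {s t : ℕ} (h : s < t) :
    likersAt (L.take t) s = likersAt L s := by
  unfold likersAt
  rw [List.getD_eq_getElem?_getD, List.getD_eq_getElem?_getD, List.getElem?_take]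
  simp [h]

lemma greedy_take (Alg : OnlineAlg A) (L : List (Finset A)) {t : ℕ} :
    ∀ {s : ℕ}, s ≤ t → greedy Alg (L.take t) s = greedy Alg L s := by
  intro s
  induction s with
  | zero => intro _; rfl
  | succ s ih =>
    intro h
    have hs : s < t := h
    simp only [greedy_succ]
    unfold greedyUpdate
    rw [ih hs.le, likersAt_take L hs, List.take_take, Nat.min_eq_left hs.le]

lemma matchedUpTo_succ (Alg : OnlineAlg A) (L : List (Finset A)) (t : ℕ) :
    matchedUpTo Alg L (t + 1) =
      match assignAt Alg L t with
      | some a => insert a (matchedUpTo Alg L t)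
      | none => matchedUpTo Alg L t := by
  simp only [matchedUpTo, assignAt]
  cases Alg (L.take t) (likersAt L t) with
  | none => rfl
  | some a =>
    by_cases hc : a ∈ likersAt L t ∧ a ∉ matchedUpTo Alg L t <;> simp [hc]

lemma matchedUpTo_subset_succ (Alg : OnlineAlg A) (L : List (Finset A)) (t : ℕ) :
    matchedUpTo Alg L t ⊆ matchedUpTo Alg L (t + 1) := by
  rw [matchedUpTo_succ]
  cases assignAt Alg L t with
  | none => exact Finset.Subset.refl _
  | some a => exact Finset.subset_insert _ _

lemma matchedUpTo_mono (Alg : OnlineAlg A) (L : List (Finset A)) {s t : ℕ} (h : s ≤ t) :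
    matchedUpTo Alg L s ⊆ matchedUpTo Alg L t := by
  induction h with
  | refl => exact Finset.Subset.refl _
  | step h ih => exact ih.trans (matchedUpTo_subset_succ _ _ _)

lemma assignAt_eq_some_iff {Alg : OnlineAlg A} {L : List (Finset A)} {t : ℕ} {a : A} :
    assignAt Alg L t = some a ↔
      Alg (L.take t) (likersAt L t) = some a ∧ a ∈ likersAt L t ∧
        a ∉ matchedUpTo Alg L t := by
  constructor
  · intro h
    unfold assignAt at h
    split at h
    next b hb =>
      split at h
      next hc =>
        obtain rfl := Option.some_injective _ h
        exact ⟨hb, hc.1, hc.2⟩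
      next => exact absurd h (by simp)
    next => exact absurd h (by simp)
  · rintro ⟨h1, h2, h3⟩
    unfold assignAt
    rw [h1]
    exact (by rw [if_pos ⟨h2, h3⟩] :
      (if a ∈ likersAt L t ∧ a ∉ matchedUpTo Alg L t then some a else none) = some a)

lemma mem_matchedUpTo {Alg : OnlineAlg A} {L : List (Finset A)} {t : ℕ} {a : A} :
    a ∈ matchedUpTo Alg L t ↔ ∃ s, s < t ∧ assignAt Alg L s = some a := by
  induction t with
  | zero => simp [matchedUpTo]
  | succ t ih =>
    rw [matchedUpTo_succ]
    cases h : assignAt Alg L t with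
    | none =>
      rw [ih]
      constructor
      · rintro ⟨s, hs, h2⟩; exact ⟨s, Nat.lt_succ_of_lt hs, h2⟩
      · rintro ⟨s, hs, h2⟩
        rcases Nat.lt_succ_iff_lt_or_eq.mp hs with hs | rfl
        · exact ⟨s, hs, h2⟩
        · rw [h] at h2; exact absurd h2 (by simp)
    | some b =>
      simp only [Finset.mem_insert, ih]
      constructor
      · rintro (rfl | ⟨s, hs, h2⟩)
        · exact ⟨t, Nat.lt_succ_self t, h⟩
        · exact ⟨s, Nat.lt_succ_of_lt hs, h2⟩
      · rintro ⟨s, hs, h2⟩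
        rcases Nat.lt_succ_iff_lt_or_eq.mp hs with hs | rfl
        · exact Or.inr ⟨s, hs, h2⟩
        · rw [h] at h2; exact Or.inl (Option.some_injective _ h2).symm

lemma assignAt_inj {Alg : OnlineAlg A} {L : List (Finset A)} {s t : ℕ} {a : A}
    (hs : assignAt Alg L s = some a) (ht : assignAt Alg L t = some a) : s = t := by
  by_contra hne
  wlog h : s < t generalizing s t
  · exact this ht hs (Ne.symm hne) (by omega)
  have hmem : a ∈ matchedUpTo Alg L t :=
    matchedUpTo_mono Alg L h ((mem_matchedUpTo (t := s + 1)).mpr ⟨s, Nat.lt_succ_self s, hs⟩)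
  exact (assignAt_eq_some_iff.mp ht).2.2 hmem

lemma card_classItems (classOf : A → Fin k) (Alg : OnlineAlg A) (L : List (Finset A))
    (j : Fin k) :
    (classItems classOf Alg L j).card =
      ((matchedUpTo Alg L L.length).filter fun a => classOf a = j).card := by
  have key : ∀ t ∈ classItems classOf Alg L j, (assignAt Alg L t).isSome := by
    intro t ht
    simp only [classItems, Finset.mem_filter] at ht
    obtain ⟨-, a, -, h2, -⟩ := ht
    simp [h2]
  refine Finset.card_bij (fun t ht => (assignAt Alg L t).get (key t ht)) ?_ ?_ ?_
  · intro t ht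
    have ht' := ht
    simp only [classItems, Finset.mem_filter, Finset.mem_range] at ht'
    obtain ⟨hlt, a, -, h2, h3⟩ := ht'
    have ha : (assignAt Alg L t).get (key t ht) = a :=
      Option.some_injective _ ((Option.some_get _).trans h2)
    simp only [Finset.mem_filter, ha]
    exact ⟨mem_matchedUpTo.mpr ⟨t, hlt, h2⟩, h3⟩
  · intro t1 ht1 t2 ht2 heq
    have e1 : assignAt Alg L t1 = some ((assignAt Alg L t1).get (key t1 ht1)) :=
      (Option.some_get _).symm
    have e2 : assignAt Alg L t2 = some ((assignAt Alg L t2).get (key t2 ht2)) :=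
      (Option.some_get _).symm
    exact assignAt_inj e1 (e2.trans (congrArg some heq.symm))
  · intro b hb
    rw [Finset.mem_filter] at hb
    obtain ⟨s, hs, hsb⟩ := mem_matchedUpTo.mp hb.1
    have hsmem : s ∈ classItems classOf Alg L j := by
      simp only [classItems, Finset.mem_filter, Finset.mem_range]
      exact ⟨hs, b, Finset.mem_univ b, hsb, hb.2⟩
    exact ⟨s, hsmem, Option.some_injective _ ((Option.some_get _).trans hsb)⟩

lemma head?_toList_of_nonempty {s : Finset A} (h : s.Nonempty) :
    ∃ a, s.toList.head? = some a ∧ a ∈ s := by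
  have hne : s.toList ≠ [] := by simp [Finset.toList_eq_nil, h.ne_empty]
  cases hl : s.toList.head? with
  | none => exact absurd (List.head?_eq_none_iff.mp hl) hne
  | some a => exact ⟨a, rfl, (Finset.mem_toList).mp (List.mem_of_mem_head? hl)⟩

lemma mkAlg_apply (Alg : OnlineAlg A) (L : List (Finset A)) {t : ℕ} (ht : t ≤ L.length)
    (cur : Finset A) :
    mkAlg Alg (L.take t) cur = greedyStep Alg (greedy Alg L t) (L.take t) cur := by
  show greedyStep Alg (greedy Alg (L.take t) (L.take t).length) (L.take t) cur = _
  rw [List.length_take, Nat.min_eq_left ht, greedy_take Alg L le_rfl]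

lemma matchedUpTo_mkAlg (Alg : OnlineAlg A) (L : List (Finset A)) :
    ∀ {t : ℕ}, t ≤ L.length → matchedUpTo (mkAlg Alg) L t = greedy Alg L t := by
  intro t
  induction t with
  | zero => intro _; rfl
  | succ t ih =>
    intro h
    have ht : t < L.length := h
    simp only [matchedUpTo]
    rw [greedy_succ, ih ht.le, mkAlg_apply Alg L ht.le]
    unfold greedyUpdate
    cases greedyStep Alg (greedy Alg L t) (L.take t) (likersAt L t) <;> rfl

lemma greedyStep_advice {Alg : OnlineAlg A} {hist : List (Finset A)} {cur prev : Finset A}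
    {a : A} (h1 : Alg hist cur = some a) (h2 : a ∈ cur) (h3 : a ∉ prev) :
    greedyStep Alg prev hist cur = some a := by
  unfold greedyStep
  rw [h1]
  exact (by rw [if_pos ⟨h2, h3⟩] :
    (if a ∈ cur ∧ a ∉ prev then some a else (cur \ prev).toList.head?) = some a)

lemma greedyStep_of_nonempty (Alg : OnlineAlg A) (M : Finset A) (hist : List (Finset A))
    (cur : Finset A) (h : (cur \ M).Nonempty) :
    ∃ b, greedyStep Alg M hist cur = some b ∧ b ∈ cur ∧ b ∉ M := by
  obtain ⟨b0, hb0, hb0m⟩ := head?_toList_of_nonempty h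
  rw [Finset.mem_sdiff] at hb0m
  unfold greedyStep
  split
  next c hA =>
    by_cases hc : c ∈ cur ∧ c ∉ M
    · exact ⟨c, by rw [if_pos hc], hc⟩
    · exact ⟨b0, by rw [if_neg hc]; exact hb0, hb0m⟩
  next => exact ⟨b0, hb0, hb0m⟩

lemma mkAlg_nonWasteful (Alg : OnlineAlg A) : NonWasteful (mkAlg Alg) := by
  intro L t ht hex
  obtain ⟨a, ha, hna⟩ := hex
  have hM : matchedUpTo (mkAlg Alg) L t = greedy Alg L t := matchedUpTo_mkAlg Alg L ht.le
  rw [hM] at hna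
  have hne : (likersAt L t \ greedy Alg L t).Nonempty :=
    ⟨a, Finset.mem_sdiff.mpr ⟨ha, hna⟩⟩
  obtain ⟨b, hb, hbc⟩ :=
    greedyStep_of_nonempty Alg (greedy Alg L t) (L.take t) (likersAt L t) hne
  have hG : mkAlg Alg (L.take t) (likersAt L t) = some b := by
    rw [mkAlg_apply Alg L ht.le]; exact hb
  have hsome : assignAt (mkAlg Alg) L t = some b :=
    assignAt_eq_some_iff.mpr ⟨hG, hbc.1, by rw [hM]; exact hbc.2⟩
  rw [hsome]; rfl

lemma matched_subset_mkAlg (Alg : OnlineAlg A) (L : List (Finset A)) :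
    ∀ {t : ℕ}, t ≤ L.length → matchedUpTo Alg L t ⊆ matchedUpTo (mkAlg Alg) L t := by
  intro t
  induction t with
  | zero => intro _; exact Finset.Subset.refl _
  | succ t ih =>
    intro h
    have ht : t < L.length := h
    have ihs := ih ht.le
    have hsub := matchedUpTo_subset_succ (mkAlg Alg) L t
    rw [matchedUpTo_succ Alg L t]
    cases hA : assignAt Alg L t with
    | none => exact ihs.trans hsub
    | some a =>
      intro x hx
      rcases Finset.mem_insert.mp hx with rfl | hx'
      · by_cases hmem : x ∈ matchedUpTo (mkAlg Alg) L t
        · exact hsub hmem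
        · obtain ⟨h1, h2, h3⟩ := assignAt_eq_some_iff.mp hA
          have hG : mkAlg Alg (L.take t) (likersAt L t) = some x := by
            rw [mkAlg_apply Alg L ht.le]
            exact greedyStep_advice h1 h2
              (by rw [← matchedUpTo_mkAlg Alg L ht.le]; exact hmem)
          have hassign : assignAt (mkAlg Alg) L t = some x :=
            assignAt_eq_some_iff.mpr ⟨hG, h2, hmem⟩
          rw [matchedUpTo_succ (mkAlg Alg) L t, hassign]
          exact Finset.mem_insert_self _ _
      · exact hsub (ihs hx')

/-- If there is a deterministic online algorithm for matching indivisible items that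
is `α`-CMMS, then there is a non-wasteful deterministic online algorithm that is
`α`-CMMS. -/
theorem stmt_16 {A : Type*} [Fintype A] [DecidableEq A] {k : ℕ}
    (classOf : A → Fin k) (α : ℝ)
    (h : ∃ Alg : OnlineAlg A, IsCMMS classOf α Alg) :
    ∃ Alg' : OnlineAlg A, NonWasteful Alg' ∧ IsCMMS classOf α Alg' := by
  obtain ⟨Alg, hAlg⟩ := h
  refine ⟨mkAlg Alg, mkAlg_nonWasteful Alg, ?_⟩
  intro L i
  have h1 : (classItems classOf Alg L i).card ≤ (classItems classOf (mkAlg Alg) L i).card := by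
    rw [card_classItems, card_classItems]
    exact Finset.card_le_card
      (Finset.filter_subset_filter _ (matched_subset_mkAlg Alg L le_rfl))
  calc α * (mmsShare classOf L i : ℝ)
      ≤ ((classItems classOf Alg L i).card : ℝ) := hAlg L i
    _ ≤ ((classItems classOf (mkAlg Alg) L i).card : ℝ) := Nat.cast_le.mpr h1
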